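/- If (T₁,T₂) has the skewed bivariate BS distribution with parameters (α₁, α₂, β₁, β₂, λ), then (1/T₁, 1/T₂) has the skewed bivariate BS distribution with parameters (α₁, α₂, 1/β₁, 1/β₂, λ); equivalently f(1/t₁, 1/t₂; α₁,α₂,1/β₁,1/β₂,λ)/(t₁²t₂²) = f(t₁,t₂; α₁,α₂,β₁,β₂,λ) for all t₁, t₂ > 0. -/

import Mathlib

open Real MeasureTheory

/-- Standard normal pdf. -/
noncomputable def phi (x : ℝ) : ℝ := (Real.sqrt (2 * Real.pi))⁻¹ * Real.exp (-x ^ 2 / 2)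

/-- Standard normal cdf. -/
noncomputable def Phi (x : ℝ) : ℝ := ∫ t in Set.Iic x, phi t

noncomputable def aj (a b t : ℝ) : ℝ := (1/a) * (Real.sqrt (t / b) - Real.sqrt (b / t))

/-- Skewed bivariate Birnbaum–Saunders density. -/
noncomputable def fSBVBS (a1 a2 b1 b2 l t1 t2 : ℝ) : ℝ :=
  2 * phi (aj a1 b1 t1) * phi (aj a2 b2 t2) * Phi (l * (aj a1 b1 t1) * (aj a2 b2 t2)) *
    (t1 ^ (-(3:ℝ)/2) * (t1 + b1) / (2 * a1 * Real.sqrt b1)) *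
    (t2 ^ (-(3:ℝ)/2) * (t2 + b2) / (2 * a2 * Real.sqrt b2))

/-!
The substitution `t ↦ 1/t`, `β ↦ 1/β` flips the sign of each `a_j`. The normal density `φ` is even
and the skewing term `Φ(λ a₁ a₂)` only sees the product `a₁ a₂`, so both are unchanged; what remains
is that each Jacobian factor `t^{-3/2}(t + β)/(2α√β)` picks up exactly the factor `t²` of `d(1/t)`.
-/

/-- The derivative of `aj a b` at `t`. -/
noncomputable def bsJacobian (a b t : ℝ) : ℝ := t ^ (-(3:ℝ)/2) * (t + b) / (2 * a * √b)

theorem fSBVBS_eq (a1 a2 b1 b2 l t1 t2 : ℝ) :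
    fSBVBS a1 a2 b1 b2 l t1 t2 =
      2 * phi (aj a1 b1 t1) * phi (aj a2 b2 t2) * Phi (l * aj a1 b1 t1 * aj a2 b2 t2) *
        bsJacobian a1 b1 t1 * bsJacobian a2 b2 t2 :=
  rfl

theorem aj_one_div_one_div (a b t : ℝ) : aj a (1 / b) (1 / t) = -aj a b t := by
  simp only [aj, one_div, inv_div_inv]
  ring

theorem phi_neg (x : ℝ) : phi (-x) = phi x := by
  rw [phi, phi, neg_sq]

theorem one_div_rpow_neg_three_halves {t : ℝ} (ht : 0 < t) :
    (1 / t) ^ (-(3:ℝ)/2) = t ^ (-(3:ℝ)/2) * t ^ 3 := by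
  rw [one_div, inv_rpow ht.le, ← rpow_neg ht.le, ← rpow_natCast, ← rpow_add ht]
  norm_num

theorem bsJacobian_one_div_one_div (a : ℝ) {b t : ℝ} (hb : 0 < b) (ht : 0 < t) :
    bsJacobian a (1 / b) (1 / t) / t ^ 2 = bsJacobian a b t := by
  have hsb : √b ≠ 0 := (sqrt_pos.mpr hb).ne'
  rw [bsJacobian, bsJacobian, one_div_rpow_neg_three_halves ht, one_div b, sqrt_inv]
  field_simp
  rw [sq_sqrt hb.le]
  ring

theorem SBVBS_reciprocal_both_general (a1 a2 b1 b2 l t1 t2 : ℝ)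
    (hb1 : 0 < b1) (hb2 : 0 < b2)
    (ht1 : 0 < t1) (ht2 : 0 < t2) :
    fSBVBS a1 a2 (1 / b1) (1 / b2) l (1 / t1) (1 / t2) / (t1 ^ 2 * t2 ^ 2)
      = fSBVBS a1 a2 b1 b2 l t1 t2 := by
  rw [fSBVBS_eq, fSBVBS_eq, aj_one_div_one_div, aj_one_div_one_div, phi_neg, phi_neg,
    ← bsJacobian_one_div_one_div a1 hb1 ht1, ← bsJacobian_one_div_one_div a2 hb2 ht2]
  simp only [mul_neg, neg_mul, neg_neg]
  ring

theorem SBVBS_reciprocal_both (a1 a2 b1 b2 l t1 t2 : ℝ)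
    (ha1 : 0 < a1) (ha2 : 0 < a2) (hb1 : 0 < b1) (hb2 : 0 < b2)
    (ht1 : 0 < t1) (ht2 : 0 < t2) :
    fSBVBS a1 a2 (1 / b1) (1 / b2) l (1 / t1) (1 / t2) / (t1 ^ 2 * t2 ^ 2)
      = fSBVBS a1 a2 b1 b2 l t1 t2 :=
  SBVBS_reciprocal_both_general a1 a2 b1 b2 l t1 t2 hb1 hb2 ht1 ht2
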